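/- arXiv:q-alg/9508018 — 2 statements merged into one kernel-verified Lean document; each statement's English description precedes it below -/
import Mathlib

section
/- Let V be a vertex operator algebra and let M be a vector space equipped with a linear map v ↦ Y_M(v,z) = Σ_{n∈ℤ} v_n z^{-n-1} (v_n ∈ End M) satisfying only: the truncation condition (v_n w = 0 for n sufficiently large), the vacuum condition Y_M(𝟏,z) = id_M, and the Jacobi identity. Then the L(−1)-derivative property (d/dz) Y_M(v,z) = Y_M(L(−1)v,z) holds for all v ∈ V, and the operators L(n) = ω_{n+1} (the components of Y_M(ω,z)) satisfy the Virasoro relations [L(m),L(n)] = (m−n)L(m+n) + (1/12)(m³−m)δ_{m+n,0}·(rank V) for all m,n ∈ ℤ. -/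
noncomputable section

open scoped BigOperators

/-- A vertex operator algebra over `ℂ` (axioms as in [FLM]), described in terms of the
component operators `aₙ` of the vertex operators `Y(a,z) = ∑_{n ∈ ℤ} aₙ z^{-n-1}`;
the Jacobi identity is imposed in its equivalent component (Borcherds identity) form. -/
structure VOA where
  carrier : Type
  [addCommGroup : AddCommGroup carrier]
  [isModule : Module ℂ carrier]
  /-- `Y a n` is the component operator `aₙ` of the vertex operator `Y(a,z)`. -/
  Y : carrier →ₗ[ℂ] ℤ → Module.End ℂ carrier
  /-- the vacuum vector `𝟏` -/
  one : carrier
  /-- the Virasoro element `ω` -/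
  omega : carrier
  /-- the rank (central charge) of the algebra -/
  rank : ℂ
  /-- the grading `V = ⊕_{n ∈ ℤ} V_n` -/
  grading : ℤ → Submodule ℂ carrier
  grading_indep : iSupIndep grading
  grading_sup : (⨆ n, grading n) = ⊤
  grading_fd : ∀ n, FiniteDimensional ℂ (grading n)
  grading_bdd : ∃ N : ℤ, ∀ n : ℤ, n < N → grading n = ⊥
  one_mem : one ∈ grading 0
  omega_mem : omega ∈ grading 2
  mode_grading : ∀ (r s m : ℤ) (a v : carrier),
    a ∈ grading r → v ∈ grading s → Y a m v ∈ grading (r + s - m - 1)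
  trunc : ∀ a v : carrier, ∃ N : ℤ, ∀ n : ℤ, N ≤ n → Y a n v = 0
  vacuum : ∀ n : ℤ, Y one n = if n = -1 then 1 else 0
  creation : ∀ a : carrier, Y a (-1) one = a
  creation_nonneg : ∀ (a : carrier) (n : ℤ), 0 ≤ n → Y a n one = 0
  jacobi : ∀ (a b v : carrier) (p q r : ℤ),
    (∑ᶠ i : ℕ, ((Ring.choose p i : ℤ) : ℂ) • Y (Y a (r + (i : ℤ)) b) (p + q - (i : ℤ)) v) =
      (∑ᶠ i : ℕ, ((-1 : ℂ) ^ i * ((Ring.choose r i : ℤ) : ℂ)) •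
        (Y a (p + r - (i : ℤ)) (Y b (q + (i : ℤ)) v)
          - ((-1 : ℂ) ^ r) • Y b (q + r - (i : ℤ)) (Y a (p + (i : ℤ)) v)))
  L0_grading : ∀ (n : ℤ) (v : carrier), v ∈ grading n → Y omega 1 v = (n : ℂ) • v
  Lminus1_deriv : ∀ (a : carrier) (n : ℤ), Y (Y omega 0 a) n = (-n : ℂ) • Y a (n - 1)
  virasoro : ∀ m n : ℤ,
    Y omega (m + 1) * Y omega (n + 1) - Y omega (n + 1) * Y omega (m + 1) =
      ((m : ℂ) - (n : ℂ)) • Y omega (m + n + 1)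
        + (if m + n = 0 then ((m : ℂ) ^ 3 - (m : ℂ)) / 12 * rank else 0) • 1

attribute [instance] VOA.addCommGroup VOA.isModule

/-- A weak module for a vertex operator algebra `V`: a vector space `M` with a linear map
`v ↦ Y_M(v,z) = ∑ vₙ z^{-n-1}` satisfying only the truncation condition, the vacuum
condition `Y_M(𝟏,z) = id`, and the Jacobi identity (in component form). -/
structure WeakModule (V : VOA) where
  carrier : Type
  [addCommGroup : AddCommGroup carrier]
  [isModule : Module ℂ carrier]
  /-- `act a n` is the component operator `aₙ` of `Y_M(a,z)`. -/
  act : V.carrier →ₗ[ℂ] ℤ → Module.End ℂ carrier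
  trunc : ∀ (a : V.carrier) (w : carrier), ∃ N : ℤ, ∀ n : ℤ, N ≤ n → act a n w = 0
  vacuum : ∀ n : ℤ, act V.one n = if n = -1 then 1 else 0
  jacobi : ∀ (a b : V.carrier) (w : carrier) (p q r : ℤ),
    (∑ᶠ i : ℕ, ((Ring.choose p i : ℤ) : ℂ) • act (V.Y a (r + (i : ℤ)) b) (p + q - (i : ℤ)) w) =
      (∑ᶠ i : ℕ, ((-1 : ℂ) ^ i * ((Ring.choose r i : ℤ) : ℂ)) •
        (act a (p + r - (i : ℤ)) (act b (q + (i : ℤ)) w)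
          - ((-1 : ℂ) ^ r) • act b (q + r - (i : ℤ)) (act a (p + (i : ℤ)) w)))

attribute [instance] WeakModule.addCommGroup WeakModule.isModule

/-- The Virasoro operators `L(n) = ω_{n+1}` on a weak module. -/
def WeakModule.L {V : VOA} (M : WeakModule V) (n : ℤ) : Module.End ℂ M.carrier :=
  M.act V.omega (n + 1)

/-! Both identities are specializations of the Jacobi identity on `M`, whose left-hand side
sees only products `aᵢb` computed in `V`, where both identities are axioms. With `b = 𝟏`, the
relations `a₋₂𝟏 = L(-1)a`, `a₋₁𝟏 = a` and `aₖ𝟏 = 0` for `k ≥ 0` give the `L(-1)`-derivative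
property. The commutator formula `[a_p, b_q] = ∑ᵢ (p choose i) (aᵢb)_{p+q-i}`, applied to
`a = b = ω`, has only the terms `ω₀ω = L(-1)ω`, `ω₁ω = 2ω`, `ω₂ω = 0`, `ω₃ω = (c/2)𝟏`, and the
derivative property turns the first into a multiple of `L(m+n)`. -/

lemma Int.cast_choose_three (p : ℤ) :
    ((Ring.choose p 3 : ℤ) : ℂ) = p * (p - 1) * (p - 2) / 6 := by
  have h := Ring.descPochhammer_eq_factorial_smul_choose p 3
  rw [← Polynomial.eval_eq_smeval, descPochhammer_succ_eval, descPochhammer_succ_eval,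
    descPochhammer_one, Polynomial.eval_X] at h
  rw [eq_div_iff (by norm_num)]
  exact_mod_cast (by simpa [Nat.factorial, mul_comm] using h.symm :
    Ring.choose p 3 * 6 = p * (p - 1) * (p - 2))

lemma finsum_nat_eq_sum_range {M : Type*} [AddCommMonoid M] {f : ℕ → M} {N : ℕ}
    (hf : ∀ i, N ≤ i → f i = 0) : ∑ᶠ i, f i = ∑ i ∈ Finset.range N, f i :=
  finsum_eq_sum_of_support_subset f fun i hi =>
    Finset.mem_coe.2 <| Finset.mem_range.2 <| not_le.1 fun h => hi (hf i h)

namespace VOA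

variable (V : VOA)

lemma mode_omega_zero_eq (a : V.carrier) : V.Y V.omega 0 a = V.Y a (-2) V.one := by
  simpa [V.creation] using (LinearMap.congr_fun (V.Lminus1_deriv a (-1)) V.one)

lemma mode_omega_one_omega : V.Y V.omega 1 V.omega = (2 : ℂ) • V.omega := by
  simpa using V.L0_grading 2 V.omega V.omega_mem

/-- Since `ω = ω₋₁𝟏` and `ωⱼ𝟏 = 0` for `j ≥ 0`, the Virasoro relation for `[ωₖ, ω₋₁]` applied
to `𝟏` computes `ωₖω`. -/
lemma mode_omega_omega_of_two_le (k : ℤ) (hk : 2 ≤ k) :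
    V.Y V.omega k V.omega = (if k = 3 then V.rank / 2 else 0) • V.one := by
  have h := LinearMap.congr_fun (V.virasoro (k - 1) (-2)) V.one
  simp only [LinearMap.sub_apply, Module.End.mul_apply, LinearMap.add_apply,
    LinearMap.smul_apply, Module.End.one_apply, sub_add_cancel, Int.reduceAdd, V.creation] at h
  rw [V.creation_nonneg _ k (by omega), map_zero, sub_zero,
    V.creation_nonneg _ (k - 1 + -2 + 1) (by omega), smul_zero, zero_add] at h
  rw [h]
  by_cases hk3 : k = 3
  · subst hk3
    norm_num [div_eq_inv_mul]
  · simp [hk3, show k - 1 + -2 ≠ 0 by omega]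

end VOA

namespace WeakModule

variable {V : VOA} (M : WeakModule V)

lemma act_one_apply (n : ℤ) (w : M.carrier) :
    M.act V.one n w = if n = -1 then w else 0 := by
  rw [M.vacuum]
  split_ifs <;> rfl

/-- The Jacobi identity at `r = 0`. -/
theorem commutator_formula (a b : V.carrier) (p q : ℤ) (w : M.carrier) :
    M.act a p (M.act b q w) - M.act b q (M.act a p w) =
      ∑ᶠ i : ℕ, ((Ring.choose p i : ℤ) : ℂ) • M.act (V.Y a i b) (p + q - i) w := by
  have h := M.jacobi a b w p q 0
  rw [eq_comm, finsum_eq_single _ 0 fun i hi => by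
    rw [Ring.choose_zero_pos ℤ (Nat.pos_of_ne_zero hi)]; simp] at h
  simpa using h

/-- The Jacobi identity at `b = 𝟏`, `q = -1`, `r = -2`. -/
theorem act_mode_neg_two_one (a : V.carrier) (n : ℤ) :
    M.act (V.Y a (-2) V.one) n = (-n : ℂ) • M.act a (n - 1) := by
  ext w
  have h := M.jacobi a V.one w (n + 1) (-1) (-2)
  rw [finsum_nat_eq_sum_range (N := 2) fun i hi => by
      rw [V.creation_nonneg a _ (by omega), map_zero]; simp,
    finsum_eq_single _ 0 fun i hi => by
      rw [M.act_one_apply, M.act_one_apply, if_neg (by omega), if_neg (by omega)]; simp] at h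
  simp only [Finset.sum_range_succ, Finset.sum_range_zero, M.act_one_apply,
    Ring.choose_zero_right, Ring.choose_one_right] at h
  norm_num [V.creation] at h
  rw [(by ring : n + 1 + -2 = n - 1)] at h
  rw [LinearMap.smul_apply, eq_sub_of_add_eq h]
  module

theorem act_mode_omega_zero (v : V.carrier) (n : ℤ) :
    M.act (V.Y V.omega 0 v) n = (-n : ℂ) • M.act v (n - 1) := by
  rw [V.mode_omega_zero_eq, M.act_mode_neg_two_one]

theorem L_commutator (m n : ℤ) :
    M.L m * M.L n - M.L n * M.L m =
      ((m : ℂ) - (n : ℂ)) • M.L (m + n)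
        + (if m + n = 0 then ((m : ℂ) ^ 3 - (m : ℂ)) / 12 * V.rank else 0) • 1 := by
  ext w
  have h := M.commutator_formula V.omega V.omega (m + 1) (n + 1) w
  rw [finsum_nat_eq_sum_range (N := 4) fun i hi => by
    rw [V.mode_omega_omega_of_two_le i (by omega), if_neg (by omega)]; simp] at h
  have h2 : V.Y V.omega 2 V.omega = 0 := by simpa using V.mode_omega_omega_of_two_le 2 le_rfl
  have h3 : V.Y V.omega 3 V.omega = (V.rank / 2) • V.one := by
    simpa using V.mode_omega_omega_of_two_le 3 (by norm_num)
  simp only [Finset.sum_range_succ, Finset.sum_range_zero, Nat.cast_zero, Nat.cast_one,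
    Nat.cast_ofNat, V.mode_omega_one_omega, h2, h3, M.act_mode_omega_zero,
    Ring.choose_zero_right, Ring.choose_one_right, Int.cast_choose_three] at h
  norm_num [M.act_one_apply] at h
  simp only [WeakModule.L, LinearMap.sub_apply, Module.End.mul_apply, LinearMap.add_apply,
    LinearMap.smul_apply, Module.End.one_apply, h]
  rw [show m + 1 + (n + 1) - 1 = m + n + 1 by ring]
  by_cases hmn : m + n = 0
  · rw [if_pos hmn, if_pos (by omega)]
    module
  · rw [if_neg hmn, if_neg (by omega), zero_smul]
    module

end WeakModule

/-- For any weak module `(M, Y_M)` over a vertex operator algebra `V` (so `M` satisfies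
only the truncation condition, the vacuum condition and the Jacobi identity), the
`L(-1)`-derivative property `Y_M(L(-1)v, z) = (d/dz) Y_M(v,z)` holds, and the operators
`L(n) = ω_{n+1}` satisfy the Virasoro relations
`[L(m), L(n)] = (m-n) L(m+n) + (1/12)(m³-m) δ_{m+n,0} (rank V)`. -/
theorem weakModule_Lminus1_derivative_and_virasoro (V : VOA) (M : WeakModule V) :
    (∀ (v : V.carrier) (n : ℤ),
      M.act (V.Y V.omega 0 v) n = (-n : ℂ) • M.act v (n - 1)) ∧
    (∀ m n : ℤ,
      M.L m * M.L n - M.L n * M.L m =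
        ((m : ℂ) - (n : ℂ)) • M.L (m + n)
          + (if m + n = 0 then ((m : ℂ) ^ 3 - (m : ℂ)) / 12 * V.rank else 0) • 1) :=
  ⟨M.act_mode_omega_zero, M.L_commutator⟩
end
end

section
/- Let c = c_{p,q} and let M be a weak L(c,0)-module. Then Ω(M) = Ω̄(M), where Ω(M) = {u ∈ M : a_m u = 0 for every homogeneous a ∈ L(c,0) and every m > wt a − 1} and Ω̄(M) = {u ∈ M : L(n)u = 0 for all n > 0}. -/
noncomputable section

open scoped BigOperators

/-- The central charge `c_{p,q} = 1 - 6(p-q)²/(pq)` of the discrete series of the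
Virasoro algebra. -/
def cpq (p q : ℕ) : ℂ := 1 - 6 * ((p : ℂ) - (q : ℂ)) ^ 2 / ((p : ℂ) * (q : ℂ))

/-- The vertex operator algebra `L(c_{p,q}, 0)` associated with the irreducible lowest
weight module for the Virasoro algebra with central charge `c_{p,q}` and lowest weight
`0`: a vertex operator algebra of rank `c_{p,q}` which is irreducible under the action of
the Virasoro algebra, i.e. under the component operators `L(n)` of `Y(ω,z)`.  (The vacuum
is then a lowest weight vector of lowest weight `0`, by the vacuum axioms.) -/
structure VirasoroVOA (p q : ℕ) where
  V : VOA
  rank_eq : V.rank = cpq p q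
  irreducible : ∀ U : Submodule ℂ V.carrier,
    (∀ (n : ℤ) (w : V.carrier), w ∈ U → V.Y V.omega n w ∈ U) → U = ⊥ ∨ U = ⊤

section VOAProofAux

open Function

lemma rc_zero (i : ℕ) (hi : i ≠ 0) : Ring.choose (0:ℤ) i = 0 := by
  have h0 : ((0:ℕ) : ℤ) = (0:ℤ) := by norm_num
  rw [← h0, Ring.choose_natCast, Nat.choose_eq_zero_of_lt (Nat.pos_of_ne_zero hi)]

lemma finsum_mem_submodule {W : Type*} [AddCommGroup W] [Module ℂ W] (S : Submodule ℂ W)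
    (f : ℕ → W) (h : ∀ i, f i ∈ S) : ∑ᶠ i, f i ∈ S := by
  by_cases hf : (Function.support f).Finite
  · rw [finsum_eq_sum f hf]; exact Submodule.sum_mem _ fun i _ => h i
  · rw [finsum_of_infinite_support hf]; exact S.zero_mem

lemma finsum_eq_two {W : Type*} [AddCommMonoid W] (f : ℕ → W) (h : ∀ i, 2 ≤ i → f i = 0) :
    ∑ᶠ i, f i = f 0 + f 1 := by
  rw [finsum_eq_sum_of_support_subset f (s := Finset.range 2)]
  · rw [Finset.sum_range_succ, Finset.sum_range_one]
  · intro i hi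
    simp only [Function.mem_support] at hi
    simp only [Finset.coe_range, Set.mem_Iio]
    by_contra h2
    exact hi (h i (by omega))

lemma finsum_eq_four {W : Type*} [AddCommMonoid W] (f : ℕ → W) (h : ∀ i, 4 ≤ i → f i = 0) :
    ∑ᶠ i, f i = f 0 + f 1 + f 2 + f 3 := by
  rw [finsum_eq_sum_of_support_subset f (s := Finset.range 4)]
  · rw [Finset.sum_range_succ, Finset.sum_range_succ, Finset.sum_range_succ,
      Finset.sum_range_one]
  · intro i hi
    simp only [Function.mem_support] at hi
    simp only [Finset.coe_range, Set.mem_Iio]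
    by_contra h2
    exact hi (h i (by omega))

variable {V : VOA}

lemma Y_omega_zero_omega : V.Y V.omega 0 V.omega = V.Y V.omega (-2) V.one := by
  have h1 := V.creation (V.Y V.omega 0 V.omega)
  rw [V.Lminus1_deriv V.omega (-1)] at h1
  rw [← h1, LinearMap.smul_apply]
  norm_num

lemma Y_omega_one_omega : V.Y V.omega 1 V.omega = (2:ℂ) • V.omega := by
  have h := V.L0_grading 2 V.omega V.omega_mem
  simpa using h

lemma Yiomega (i : ℤ) (hi : 2 ≤ i) :
    V.Y V.omega i V.omega = (if i = 3 then V.rank / 2 else 0) • V.one := by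
  have h := congrArg (fun E : Module.End ℂ V.carrier => E V.one) (V.virasoro (i-1) (-2))
  simp only [LinearMap.sub_apply, Module.End.mul_apply, LinearMap.add_apply,
    LinearMap.smul_apply, Module.End.one_apply] at h
  have e1 : i - 1 + 1 = i := by ring
  have e2 : (-2:ℤ) + 1 = -1 := by norm_num
  have e3 : i - 1 + -2 + 1 = i - 2 := by ring
  rw [e1, e2, e3, V.creation V.omega, V.creation_nonneg V.omega i (by omega),
    V.creation_nonneg V.omega (i-2) (by omega), map_zero] at h
  rw [smul_zero, sub_zero] at h
  rw [h, zero_add]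
  by_cases h3 : i = 3
  · subst h3
    rw [if_pos (by norm_num), if_pos rfl]
    congr 1
    push_cast
    ring
  · rw [if_neg (by omega), if_neg h3]

end VOAProofAux
section VOAProofAux2

variable {V : VOA} {M : WeakModule V}

lemma act_one_apply (n : ℤ) (w : M.carrier) :
    M.act V.one n w = if n = -1 then w else 0 := by
  rw [M.vacuum]
  split_ifs <;> rfl

/-- The commutator formula on a weak module. -/
lemma act_comm_formula (a b : V.carrier) (w : M.carrier) (p q : ℤ) :
    M.act a p (M.act b q w) - M.act b q (M.act a p w)
      = ∑ᶠ i : ℕ, ((Ring.choose p i : ℤ) : ℂ) • M.act (V.Y a (i:ℤ) b) (p + q - (i:ℤ)) w := by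
  have h := M.jacobi a b w p q 0
  simp only [zero_add, add_zero] at h
  rw [h]
  refine ((finsum_eq_single _ 0 ?_).trans ?_).symm
  · intro i hi
    simp [rc_zero i hi]
  · simp

/-- The iterate ("associativity") formula on a weak module, with `p = 0`. -/
lemma act_iterate_formula (a b : V.carrier) (w : M.carrier) (s m : ℤ) :
    M.act (V.Y a s b) m w
      = ∑ᶠ i : ℕ, ((-1:ℂ)^i * ((Ring.choose s i : ℤ) : ℂ)) •
          (M.act a (s - (i:ℤ)) (M.act b (m + (i:ℤ)) w)
            - ((-1:ℂ)^s) • M.act b (m + s - (i:ℤ)) (M.act a (i:ℤ) w)) := by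
  have h := M.jacobi a b w 0 m s
  simp only [zero_add] at h
  have hL : (∑ᶠ i : ℕ, ((Ring.choose (0:ℤ) i : ℤ) : ℂ) •
      M.act (V.Y a (s + (i:ℤ)) b) (m - (i:ℤ)) w) = M.act (V.Y a s b) m w := by
    refine (finsum_eq_single _ 0 ?_).trans ?_
    · intro i hi
      simp [rc_zero i hi]
    · simp
  rw [← hL]
  exact h

lemma act_Lminus1 (n : ℤ) (w : M.carrier) :
    M.act (V.Y V.omega (-2) V.one) n w = (-n : ℂ) • M.act V.omega (n-1) w := by
  have h := M.jacobi V.omega V.one w (n+1) (-1) (-2)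
  rw [finsum_eq_two] at h
  · rw [finsum_eq_single _ 0] at h
    · norm_num [act_one_apply, Ring.choose_zero_right, Ring.choose_one_right, V.creation] at h
      rw [show n + 1 + -2 = n - 1 by ring] at h
      rw [show (-(n:ℂ)) = 1 - ((n:ℂ)+1) by ring, sub_smul, one_smul]
      exact eq_sub_of_add_eq h
    · intro x hx
      rw [act_one_apply, act_one_apply, if_neg (by omega), if_neg (by omega)]
      simp
  · intro i hi
    rw [V.creation_nonneg V.omega (-2+(i:ℤ)) (by omega)]
    simp

end VOAProofAux2
section VOAProofAux3

variable {V : VOA} {M : WeakModule V}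

lemma choose3_cast (m : ℤ) : ((Ring.choose (m+1 : ℤ) 3 : ℤ) : ℂ) = ((m:ℂ)^3 - m) / 6 := by
  have h := Ring.descPochhammer_eq_factorial_smul_choose (R := ℤ) (m+1) 3
  have h2 : (descPochhammer ℤ 3).smeval (m+1) = (m+1)*m*(m-1) := by
    simp [descPochhammer, Polynomial.smeval_mul, Polynomial.smeval_sub, Polynomial.smeval_X,
      Polynomial.smeval_one, Polynomial.smeval_natCast]
    ring
  rw [h2] at h
  have h3 : ((m:ℤ)+1)*m*(m-1) = 6 * Ring.choose (m+1 : ℤ) 3 := by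
    rw [h]
    show _ = 6 * _
    rw [show (Nat.factorial 3) • Ring.choose (m+1:ℤ) 3 = 6 * Ring.choose (m+1:ℤ) 3 by
      show (6:ℕ) • _ = _
      rw [nsmul_eq_mul]; norm_num]
  have h4 : (((m:ℤ)+1)*m*(m-1) : ℂ) = 6 * ((Ring.choose (m+1 : ℤ) 3 : ℤ) : ℂ) := by
    exact_mod_cast congrArg (fun z : ℤ => (z : ℂ)) h3
  rw [eq_div_iff (by norm_num : (6:ℂ) ≠ 0)]
  linear_combination -h4

lemma virM (m n : ℤ) (w : M.carrier) :
    M.L m (M.L n w) - M.L n (M.L m w)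
      = ((m:ℂ) - n) • M.L (m+n) w
        + (if m + n = 0 then ((m:ℂ)^3 - m) / 12 * V.rank else 0) • w := by
  show M.act V.omega (m+1) (M.act V.omega (n+1) w) - M.act V.omega (n+1) (M.act V.omega (m+1) w) = _
  rw [act_comm_formula]
  rw [finsum_eq_four]
  · rw [show ((0:ℕ):ℤ) = 0 by norm_num, show ((1:ℕ):ℤ) = 1 by norm_num,
      show ((2:ℕ):ℤ) = 2 by norm_num, show ((3:ℕ):ℤ) = 3 by norm_num,
      show m + 1 + (n+1) - (0:ℤ) = m+n+2 by ring, show m + 1 + (n+1) - (1:ℤ) = m+n+1 by ring,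
      show m + 1 + (n+1) - (2:ℤ) = m+n by ring, show m + 1 + (n+1) - (3:ℤ) = m+n-1 by ring,
      Y_omega_zero_omega, Y_omega_one_omega, Yiomega 2 (by norm_num), Yiomega 3 (by norm_num),
      if_neg (by norm_num), if_pos rfl, act_Lminus1, Ring.choose_zero_right,
      Ring.choose_one_right, show m+n+2-1 = m+n+1 by ring]
    simp only [map_smul, map_zero, LinearMap.smul_apply, Pi.smul_apply, LinearMap.zero_apply,
      Pi.zero_apply, act_one_apply, zero_smul, smul_zero, add_zero, Int.cast_one, one_smul, choose3_cast]
    show _ = _ • M.act V.omega (m+n+1) w + _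
    by_cases hmn : m + n = 0
    · have hcn : (n:ℂ) = -(m:ℂ) := by
        have := congrArg (fun z : ℤ => (z:ℂ)) hmn
        push_cast at this
        linear_combination this
      rw [if_pos hmn, if_pos (by omega)]
      push_cast [hcn]
      match_scalars <;> ring
    · rw [if_neg hmn, if_neg (by omega)]
      push_cast
      match_scalars <;> ring
  · intro i hi
    rw [Yiomega (i:ℤ) (by omega), if_neg (by omega)]
    simp

end VOAProofAux3
section VOAProofAux4

variable {V : VOA} (M : WeakModule V)

/-- Composition of Virasoro operators indexed by a list. -/
def LK (K : List ℤ) : Module.End ℂ M.carrier := (K.map M.L).prod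

variable {M}

lemma LK_nil : LK M ([] : List ℤ) = 1 := by simp [LK]

lemma LK_cons (k : ℤ) (K : List ℤ) : LK M (k :: K) = M.L k * LK M K := by
  simp [LK]

lemma LK_append (K₁ K₂ : List ℤ) : LK M (K₁ ++ K₂) = LK M K₁ * LK M K₂ := by
  simp [LK]

lemma LK_split (K₁ L : List ℤ) (v : M.carrier) :
    LK M (K₁ ++ L) v = LK M K₁ (LK M L v) := by
  rw [LK_append, Module.End.mul_apply]

lemma LK_append_single (K : List ℤ) (x : ℤ) (v : M.carrier) :
    LK M (K ++ [x]) v = LK M K (M.L x v) := by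
  rw [LK_split]
  congr 1

lemma exists_last_pos : ∀ K : List ℤ, 0 < K.sum →
    ∃ K₁ k K₂, K = K₁ ++ k :: K₂ ∧ 0 < k ∧ ∀ j ∈ K₂, j ≤ 0 := by
  intro K
  induction K using List.reverseRecOn with
  | nil => intro h; simp at h
  | append_singleton K' a ih =>
    intro h
    by_cases ha : 0 < a
    · exact ⟨K', a, [], rfl, ha, by simp⟩
    · have hs : 0 < K'.sum := by
        simp [List.sum_append] at h
        omega
      obtain ⟨K₁, k, K₂, heq, hk, htail⟩ := ih hs
      refine ⟨K₁, k, K₂ ++ [a], by rw [heq]; simp, hk, ?_⟩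
      intro j hj
      rcases List.mem_append.mp hj with hj | hj
      · exact htail j hj
      · simp at hj; omega

lemma monomial_step (u : M.carrier) (hu : ∀ n : ℤ, 0 < n → M.L n u = 0) (t : ℕ)
    (OIH : ∀ K : List ℤ, K.length ≤ t → 0 < K.sum → LK M K u = 0) :
    ∀ (n : ℕ) (K₂ : List ℤ), K₂.length = n → ∀ (K₁ : List ℤ) (k : ℤ), 0 < k →
      (∀ j ∈ K₂, j ≤ 0) → 0 < (K₁ ++ k :: K₂).sum → (K₁ ++ k :: K₂).length ≤ t + 1 →
      LK M (K₁ ++ k :: K₂) u = 0 := by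
  intro n
  induction n with
  | zero =>
    intro K₂ hlen K₁ k hk _ _ _
    have hnil : K₂ = [] := List.eq_nil_of_length_eq_zero hlen
    subst hnil
    rw [LK_append_single, hu k hk, map_zero]
  | succ n ih =>
    intro K₂ hlen K₁ k hk htail hsum hlent
    obtain ⟨k₂, K₂', rfl⟩ : ∃ x xs, K₂ = x :: xs := by
      cases K₂ with
      | nil => simp at hlen
      | cons x xs => exact ⟨x, xs, rfl⟩
    have hk₂ : k₂ ≤ 0 := htail k₂ (by simp)
    have key : M.L k (M.L k₂ (LK M K₂' u)) = M.L k₂ (M.L k (LK M K₂' u))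
        + (((k:ℂ) - k₂) • M.L (k+k₂) (LK M K₂' u)
          + (if k + k₂ = 0 then ((k:ℂ)^3 - k)/12 * V.rank else 0) • (LK M K₂' u)) := by
      have hvw := virM k k₂ (LK M K₂' u)
      rw [← hvw]
      abel
    have hstep : LK M (K₁ ++ k :: k₂ :: K₂') u = LK M K₁ (M.L k (M.L k₂ (LK M K₂' u))) := by
      rw [LK_split, LK_cons, LK_cons, Module.End.mul_apply, Module.End.mul_apply]
    rw [hstep, key, map_add, map_add, map_smul, map_smul]
    have t1 : LK M K₁ (M.L k₂ (M.L k (LK M K₂' u))) = 0 := by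
      have h1 := ih K₂' (by simpa using hlen) (K₁ ++ [k₂]) k hk
        (fun j hj => htail j (by simp [hj]))
        (by simp [List.sum_append] at hsum ⊢; omega)
        (by simp [List.length_append] at hlent ⊢; omega)
      rw [List.append_assoc] at h1
      simpa [LK_split, LK_cons, Module.End.mul_apply] using h1
    have t2 : LK M K₁ (M.L (k+k₂) (LK M K₂' u)) = 0 := by
      have h2 : LK M (K₁ ++ (k+k₂) :: K₂') u = 0 := by
        refine OIH _ ?_ ?_
        · simp [List.length_append] at hlent ⊢; omega
        · simp [List.sum_append] at hsum ⊢; omega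
      rw [LK_split, LK_cons, Module.End.mul_apply] at h2
      exact h2
    have t3 : (if k + k₂ = 0 then ((k:ℂ)^3 - k)/12 * V.rank else 0) •
        LK M K₁ (LK M K₂' u) = 0 := by
      by_cases hk0 : k + k₂ = 0
      · rw [← LK_split]
        have h3 : LK M (K₁ ++ K₂') u = 0 := by
          refine OIH _ ?_ ?_
          · simp [List.length_append] at hlent ⊢; omega
          · simp [List.sum_append] at hsum ⊢; omega
        rw [h3, smul_zero]
      · rw [if_neg hk0, zero_smul]
    rw [t1, t2, t3, smul_zero]
    simp

lemma monomial_vanish (u : M.carrier) (hu : ∀ n : ℤ, 0 < n → M.L n u = 0) :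
    ∀ K : List ℤ, 0 < K.sum → LK M K u = 0 := by
  suffices H : ∀ t K, K.length ≤ t → 0 < K.sum → LK M K u = 0 by
    exact fun K h => H K.length K le_rfl h
  intro t
  induction t with
  | zero =>
    intro K h1 h2
    have : K = [] := List.eq_nil_of_length_eq_zero (Nat.le_zero.mp h1)
    subst this
    simp at h2
  | succ t IH =>
    intro K hlen hsum
    obtain ⟨K₁, k, K₂, rfl, hk, htail⟩ := exists_last_pos K hsum
    exact monomial_step u hu t IH K₂.length K₂ rfl K₁ k hk htail hsum hlen

end VOAProofAux4
section VOAProofAux5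

variable {V : VOA} (M : WeakModule V)

/-- The submodule of homogeneous vectors of weight `r` all of whose "positive-degree"
descendant modes kill `u`, allowing Virasoro operators on both sides. -/
def Usub (u : M.carrier) (r : ℤ) : Submodule ℂ V.carrier where
  carrier := {a | a ∈ V.grading r ∧ ∀ (m : ℤ) (K K' : List ℤ),
      r < K.sum + m + K'.sum + 1 → LK M K (M.act a m (LK M K' u)) = 0}
  add_mem' := by
    rintro a b ⟨ha1, ha2⟩ ⟨hb1, hb2⟩
    refine ⟨(V.grading r).add_mem ha1 hb1, fun m K K' hc => ?_⟩
    have h : M.act (a+b) m = M.act a m + M.act b m := by rw [map_add]; rfl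
    rw [h, LinearMap.add_apply, map_add, ha2 m K K' hc, hb2 m K K' hc, add_zero]
  zero_mem' := by
    refine ⟨(V.grading r).zero_mem, fun m K K' _ => ?_⟩
    simp
  smul_mem' := by
    rintro c a ⟨ha1, ha2⟩
    refine ⟨(V.grading r).smul_mem c ha1, fun m K K' hc => ?_⟩
    have h : M.act (c • a) m = c • M.act a m := by rw [map_smul]; rfl
    rw [h, LinearMap.smul_apply, map_smul, ha2 m K K' hc, smul_zero]

variable {M}

lemma one_mem_Usub (u : M.carrier) (hu : ∀ n : ℤ, 0 < n → M.L n u = 0) :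
    V.one ∈ Usub M u 0 := by
  refine ⟨V.one_mem, fun m K K' hc => ?_⟩
  by_cases hm : m = -1
  · subst hm
    have h1 : M.act V.one (-1) (LK M K' u) = LK M K' u := by
      rw [act_one_apply, if_pos rfl]
    rw [h1, ← LK_split]
    refine monomial_vanish u hu _ ?_
    simp [List.sum_append]
    omega
  · rw [act_one_apply, if_neg hm, map_zero]

lemma closure_Usub (u : M.carrier) (s r : ℤ) (a : V.carrier) (ha : a ∈ Usub M u r) :
    V.Y V.omega s a ∈ Usub M u (r + 1 - s) := by
  obtain ⟨ha1, ha2⟩ := ha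
  constructor
  · have h := V.mode_grading 2 r s V.omega a V.omega_mem ha1
    rwa [show (2:ℤ) + r - s - 1 = r + 1 - s by ring] at h
  · intro m K K' hc
    rw [act_iterate_formula]
    have hker : (∑ᶠ i : ℕ, ((-1:ℂ)^i * ((Ring.choose s i : ℤ) : ℂ)) •
        (M.act V.omega (s - (i:ℤ)) (M.act a (m + (i:ℤ)) (LK M K' u))
          - ((-1:ℂ)^s) • M.act a (m + s - (i:ℤ)) (M.act V.omega (i:ℤ) (LK M K' u))))
        ∈ LinearMap.ker (LK M K) := by
      refine finsum_mem_submodule _ _ fun i => ?_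
      refine Submodule.smul_mem _ _ (Submodule.sub_mem _ ?_ (Submodule.smul_mem _ _ ?_))
      · rw [LinearMap.mem_ker]
        have e1 : M.act V.omega (s - (i:ℤ)) = M.L (s - (i:ℤ) - 1) := by
          rw [WeakModule.L, show s - (i:ℤ) - 1 + 1 = s - (i:ℤ) by ring]
        rw [e1, show (LK M K) ((M.L (s - (i:ℤ) - 1)) ((M.act a (m + (i:ℤ)))
            ((LK M K') u))) = LK M (K ++ [s - (i:ℤ) - 1])
            ((M.act a (m + (i:ℤ))) ((LK M K') u)) from (LK_append_single _ _ _).symm]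
        refine ha2 (m + (i:ℤ)) (K ++ [s - (i:ℤ) - 1]) K' ?_
        simp [List.sum_append]
        omega
      · rw [LinearMap.mem_ker]
        have e2 : M.act V.omega (i:ℤ) (LK M K' u) = LK M (((i:ℤ) - 1) :: K') u := by
          rw [LK_cons, Module.End.mul_apply, WeakModule.L,
            show (i:ℤ) - 1 + 1 = (i:ℤ) by ring]
        rw [e2]
        refine ha2 (m + s - (i:ℤ)) K (((i:ℤ) - 1) :: K') ?_
        simp
        omega
    exact LinearMap.mem_ker.mp hker

end VOAProofAux5
/-- For any weak `L(c_{p,q},0)`-module `M`, the space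
`Ω(M) = {u : aₘ u = 0 for all homogeneous a and all m > wt a - 1}` coincides with
`Ω̄(M) = {u : L(n)u = 0 for all n > 0}`. -/
theorem omega_eq_omegaBar (p q : ℕ) (hp : 2 ≤ p) (hq : 2 ≤ q) (hpq : Nat.Coprime p q)
    (A : VirasoroVOA p q) (M : WeakModule A.V) :
    {u : M.carrier | ∀ (a : A.V.carrier) (r m : ℤ),
        a ∈ A.V.grading r → r - 1 < m → M.act a m u = 0} =
      {u : M.carrier | ∀ n : ℤ, 0 < n → M.L n u = 0} := by
  ext u
  simp only [Set.mem_setOf_eq]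
  constructor
  · intro h n hn
    exact h A.V.omega 2 (n+1) A.V.omega_mem (by omega)
  · intro hu a r m har hm
    set U : Submodule ℂ A.V.carrier := ⨆ s : ℤ, Usub M u s with hU
    have hinv : ∀ (n : ℤ) (w : A.V.carrier), w ∈ U → A.V.Y A.V.omega n w ∈ U := by
      intro n w hw
      refine Submodule.iSup_induction (motive := fun x => A.V.Y A.V.omega n x ∈ U) _ hw ?_ ?_ ?_
      · intro s x hx
        exact Submodule.mem_iSup_of_mem (s + 1 - n) (closure_Usub u n s x hx)
      · show A.V.Y A.V.omega n 0 ∈ U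
        rw [map_zero]; exact U.zero_mem
      · intro x y hx hy
        show A.V.Y A.V.omega n (x + y) ∈ U
        rw [map_add]; exact U.add_mem hx hy
    rcases A.irreducible U hinv with hbot | htop
    · have h1 : A.V.one ∈ U := Submodule.mem_iSup_of_mem 0 (one_mem_Usub u hu)
      rw [hbot] at h1
      have hone : A.V.one = 0 := by simpa using h1
      have ha0 : a = 0 := by
        have hc := A.V.creation a
        rw [hone, map_zero] at hc
        exact hc.symm
      rw [ha0]
      simp
    · have haU : a ∈ U := htop ▸ Submodule.mem_top
      obtain ⟨f, hf, hsum⟩ := (Submodule.mem_iSup_iff_exists_finsupp _ a).mp haU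
      have hsum' : a = ∑ s ∈ f.support, f s := by rw [← hsum]; rfl
      have hmem1 : a - f r ∈ A.V.grading r := Submodule.sub_mem _ har (hf r).1
      have hmem2 : a - f r ∈ ⨆ (j : ℤ) (_ : j ≠ r), A.V.grading j := by
        by_cases hr : r ∈ f.support
        · have heq : a - f r = ∑ s ∈ f.support.erase r, f s := by
            rw [hsum', ← Finset.add_sum_erase _ _ hr, add_sub_cancel_left]
          rw [heq]
          refine Submodule.sum_mem _ fun s hs => ?_
          exact Submodule.mem_iSup_of_mem s
            (Submodule.mem_iSup_of_mem (Finset.mem_erase.mp hs).1 ((hf s).1))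
        · have hfr0 : f r = 0 := Finsupp.notMem_support_iff.mp hr
          rw [hfr0, sub_zero, hsum']
          refine Submodule.sum_mem _ fun s hs => ?_
          exact Submodule.mem_iSup_of_mem s
            (Submodule.mem_iSup_of_mem (fun h => hr (h ▸ hs)) ((hf s).1))
      have hzero : a - f r = 0 :=
        Submodule.disjoint_def.mp (iSupIndep_def.mp A.V.grading_indep r) _ hmem1 hmem2
      have haUr : a ∈ Usub M u r := by
        have heq : a = f r := by rw [← sub_eq_zero]; exact hzero
        rw [heq]
        exact hf r
      have hfin := haUr.2 m [] [] (by simp; omega)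
      simpa [LK_nil] using hfin
end
end
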